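/- arXiv:2301.01564 — 3 statements merged into one kernel-verified Lean document; each statement's English description precedes it below -/
import Mathlib

section
/- Let α ∈ (0,1), C₀ > 0, and let u : B̄₁ ⊆ ℝⁿ → ℝ be bounded with ‖u‖_{L^∞(B₁)} ≤ C₀. Assume that for all x ∈ B₁ and all h with x ± h ∈ B̄₁, one has |u(x+h) + u(x−h) − 2u(x)| ≤ C₀ |h|^α. Then u ∈ C^{0,α}(B̄₁) with ‖u‖_{C^{0,α}(B̄₁)} ≤ C·C₀, where C depends only on n and α. -/
open Metric

section Aux

variable {E : Type*} [NormedAddCommGroup E] [NormedSpace ℝ E]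
variable {α C₀ : ℝ} {u : E → ℝ}

private lemma limit_aux {A B D : ℝ} (hB : 0 < B)
    (h : ∀ k : ℕ, A ≤ (1/2)^k * B + D) : A ≤ D := by
  refine le_of_forall_pos_le_add fun ε hε => ?_
  obtain ⟨k, hk⟩ := exists_pow_lt_of_lt_one (div_pos hε hB) (by norm_num : (1/2:ℝ) < 1)
  have h2 : (1/2:ℝ)^k * B < ε := by
    rw [lt_div_iff₀ hB] at hk; linarith
  linarith [h k]

private lemma linfty_aux (hα0 : 0 < α) (hC₀ : 0 < C₀)
    (hL : ∀ x ∈ ball (0:E) 1, |u x| ≤ C₀)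
    (hD : ∀ x h : E, x ∈ ball (0:E) 1 → x + h ∈ closedBall (0:E) 1 →
      x - h ∈ closedBall (0:E) 1 → |u (x+h) + u (x-h) - 2*u x| ≤ C₀ * ‖h‖ ^ α) :
    ∀ x ∈ closedBall (0:E) 1, |u x| ≤ 4 * C₀ := by
  intro x hx
  rw [mem_closedBall_zero_iff] at hx
  have hnm : ‖(2⁻¹:ℝ) • x‖ ≤ 2⁻¹ := by
    rw [norm_smul, Real.norm_eq_abs, abs_of_nonneg (by norm_num : (0:ℝ) ≤ 2⁻¹)]
    nlinarith
  have hm : ((2:ℝ)⁻¹) • x ∈ ball (0:E) 1 := by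
    rw [mem_ball_zero_iff]; linarith
  have e1 : (2⁻¹:ℝ) • x + (2⁻¹:ℝ) • x = x := by
    rw [← add_smul]; norm_num
  have e2 : (2⁻¹:ℝ) • x - (2⁻¹:ℝ) • x = (0:E) := sub_self _
  have key := hD ((2⁻¹:ℝ) • x) ((2⁻¹:ℝ) • x) hm
    (by rw [e1]; exact mem_closedBall_zero_iff.mpr hx) (by rw [e2]; simp)
  rw [e1, e2] at key
  have hn1 : ‖(2⁻¹:ℝ) • x‖ ^ α ≤ 1 :=
    Real.rpow_le_one (norm_nonneg _) (by linarith) hα0.le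
  have key2 : |u x + u 0 - 2 * u ((2⁻¹:ℝ) • x)| ≤ C₀ := by
    refine key.trans ?_; nlinarith
  have h0 : |u 0| ≤ C₀ := hL 0 (by simp)
  have hm' : |u ((2⁻¹:ℝ) • x)| ≤ C₀ := hL _ hm
  rcases abs_le.mp key2 with ⟨k1, k2⟩
  rcases abs_le.mp h0 with ⟨a1, a2⟩
  rcases abs_le.mp hm' with ⟨b1, b2⟩
  rw [abs_le]; constructor <;> linarith

set_option maxHeartbeats 1000000 in
private lemma radial_aux {C₁ s : ℝ} (hα0 : 0 < α) (hα1 : α < 1) (hC₀ : 0 < C₀)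
    (hs : s = (2:ℝ)^(α-1)) (hC₁24 : 24 ≤ C₁) (hC₁s : s * C₁ + 1/2 ≤ C₁)
    (hL4 : ∀ x ∈ closedBall (0:E) 1, |u x| ≤ 4*C₀)
    (hD : ∀ x h : E, x ∈ ball (0:E) 1 → x + h ∈ closedBall (0:E) 1 →
      x - h ∈ closedBall (0:E) 1 → |u (x+h) + u (x-h) - 2*u x| ≤ C₀ * ‖h‖ ^ α) :
    ∀ (k : ℕ) (x : E), ‖x‖ ≤ 1 → ∀ a b : ℝ, 0 ≤ a → a ≤ b → b ≤ 1 →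
      |u (a • x) - u (b • x)| ≤ (1/2)^k * (8*C₀) + C₁ * C₀ * (b-a)^α := by
  have hs0 : 0 < s := hs ▸ Real.rpow_pos_of_pos (by norm_num) _
  have h2s : (2:ℝ)^α = 2 * s := by
    rw [hs]
    have h := Real.rpow_add (by norm_num : (0:ℝ) < 2) 1 (α-1)
    rw [Real.rpow_one] at h
    rw [show (1:ℝ) + (α-1) = α by ring] at h
    exact h
  -- membership helper
  have hmem : ∀ (x : E), ‖x‖ ≤ 1 → ∀ c : ℝ, 0 ≤ c → c ≤ 1 → c • x ∈ closedBall (0:E) 1 := by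
    intro x hx c hc0 hc1
    rw [mem_closedBall_zero_iff, norm_smul, Real.norm_eq_abs, abs_of_nonneg hc0]
    nlinarith
  intro k
  induction k with
  | zero =>
    intro x hx a b ha hab hb
    have h1 := hL4 _ (hmem x hx a ha (hab.trans hb))
    have h2 := hL4 _ (hmem x hx b (ha.trans hab) hb)
    have h3 : 0 ≤ C₁ * C₀ * (b-a)^α :=
      mul_nonneg (mul_nonneg (by linarith) hC₀.le) (Real.rpow_nonneg (by linarith) α)
    rcases abs_le.mp h1 with ⟨p1, p2⟩
    rcases abs_le.mp h2 with ⟨q1, q2⟩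
    rw [abs_le]; constructor <;> simp only [pow_zero, one_mul] <;> linarith
  | succ k ih =>
    intro x hx a b ha hab hb
    set ρ : ℝ := b - a with hρ
    have hρ0 : 0 ≤ ρ := by simp [hρ]; linarith
    rcases eq_or_lt_of_le hρ0 with hz | hρpos
    · -- ρ = 0
      have hba : b = a := by rw [hρ] at hz; linarith
      have hz2 : |u (a • x) - u (b • x)| = 0 := by rw [hba]; simp
      have h1 : (0:ℝ) ≤ (1/2)^(k+1) * (8*C₀) := by positivity
      have h2 : (0:ℝ) ≤ C₁ * C₀ * (b-a)^α :=
        mul_nonneg (mul_nonneg (by linarith) hC₀.le) (Real.rpow_nonneg hρ0 α)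
      rw [hz2]; linarith
    rcases le_or_gt ρ (1/3) with hρsmall | hρbig
    swap
    · -- ρ > 1/3 : use the L^∞ bound
      have h1 := hL4 _ (hmem x hx a ha (hab.trans hb))
      have h2 := hL4 _ (hmem x hx b (ha.trans hab) hb)
      have hρle1 : ρ ≤ 1 := by simp [hρ]; linarith
      have hρα : ρ ≤ ρ ^ α := by
        calc ρ = ρ ^ (1:ℝ) := (Real.rpow_one ρ).symm
        _ ≤ ρ ^ α := Real.rpow_le_rpow_of_exponent_ge hρpos hρle1 hα1.le
      have hρα3 : 1/3 < ρ ^ α := lt_of_lt_of_le hρbig hρα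
      have h24 : 8 * C₀ ≤ C₁ * C₀ * ρ ^ α := by
        nlinarith [mul_lt_mul_of_pos_left hρα3 (mul_pos (show (0:ℝ) < C₁ by linarith) hC₀)]
      have hpow : (0:ℝ) ≤ (1/2)^(k+1) * (8*C₀) := by positivity
      rcases abs_le.mp h1 with ⟨p1, p2⟩
      rcases abs_le.mp h2 with ⟨q1, q2⟩
      rw [abs_le]; constructor <;> nlinarith
    · -- 0 < ρ ≤ 1/3 : doubling
      have hρnorm : ‖ρ • x‖ ≤ ρ := by
        rw [norm_smul, Real.norm_eq_abs, abs_of_nonneg hρ0]; nlinarith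
      have hρpow : ‖ρ • x‖ ^ α ≤ ρ ^ α := Real.rpow_le_rpow (norm_nonneg _) hρnorm hα0.le
      have h2ρ : (2*ρ) ^ α = 2 * s * ρ ^ α := by
        rw [Real.mul_rpow (by norm_num) hρ0, h2s]
      -- arithmetic combining step (shared by both subcases)
      have harith : (1/2) * ((1/2)^k * (8*C₀) + C₁*C₀*(2*ρ)^α) + (1/2) * (C₀ * ρ^α)
          ≤ (1/2)^(k+1) * (8*C₀) + C₁ * C₀ * ρ^α := by
        rw [h2ρ]
        have hρα0 : (0:ℝ) ≤ ρ ^ α := Real.rpow_nonneg hρ0 α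
        have hkey : (s * C₁ + 1/2) * (C₀ * ρ^α) ≤ C₁ * (C₀ * ρ^α) :=
          mul_le_mul_of_nonneg_right hC₁s (by positivity)
        have hpow : (1/2:ℝ)^(k+1) = (1/2) * (1/2)^k := by ring
        rw [hpow]; nlinarith
      rcases le_or_gt (b + ρ) 1 with hbr | hbr
      · -- reflect a across b
        have hbmem : b • x ∈ ball (0:E) 1 := by
          rw [mem_ball_zero_iff, norm_smul, Real.norm_eq_abs,
            abs_of_nonneg (ha.trans hab)]
          nlinarith
        have e1 : b • x + ρ • x = (b + ρ) • x := (add_smul b ρ x).symm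
        have e2 : b • x - ρ • x = a • x := by
          rw [← sub_smul]; congr 1; rw [hρ]; ring
        have key := hD (b • x) (ρ • x) hbmem
          (by rw [e1]; exact hmem x hx _ (by linarith) hbr)
          (by rw [e2]; exact hmem x hx _ ha (hab.trans hb))
        rw [e1, e2] at key
        have key2 : |u ((b+ρ) • x) + u (a • x) - 2 * u (b • x)| ≤ C₀ * ρ ^ α := by
          refine key.trans ?_
          exact mul_le_mul_of_nonneg_left hρpow hC₀.le
        have ihh := ih x hx a (b+ρ) ha (by linarith) hbr
        rw [show b + ρ - a = 2*ρ by rw [hρ]; ring] at ihh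
        rcases abs_le.mp key2 with ⟨k1, k2⟩
        rcases abs_le.mp ihh with ⟨i1, i2⟩
        rw [abs_le]; constructor <;> linarith
      · -- reflect b across a; note a - ρ ≥ 0 since ρ ≤ 1/3
        have haρ : 0 ≤ a - ρ := by
          have : 1 < b + ρ := hbr
          simp only [hρ] at this ⊢
          linarith
        have hamem : a • x ∈ ball (0:E) 1 := by
          rw [mem_ball_zero_iff, norm_smul, Real.norm_eq_abs, abs_of_nonneg ha]
          have : a ≤ 1 - ρ := by simp only [hρ]; linarith
          nlinarith
        have e1 : a • x + ρ • x = b • x := by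
          rw [← add_smul]; congr 1; rw [hρ]; ring
        have e2 : a • x - ρ • x = (a - ρ) • x := (sub_smul a ρ x).symm
        have key := hD (a • x) (ρ • x) hamem
          (by rw [e1]; exact hmem x hx _ (ha.trans hab) hb)
          (by rw [e2]; exact hmem x hx _ haρ (by linarith))
        rw [e1, e2] at key
        have key2 : |u (b • x) + u ((a-ρ) • x) - 2 * u (a • x)| ≤ C₀ * ρ ^ α := by
          refine key.trans ?_
          exact mul_le_mul_of_nonneg_left hρpow hC₀.le
        have ihh := ih x hx (a-ρ) b haρ (by linarith) hb
        rw [show b - (a - ρ) = 2*ρ by rw [hρ]; ring] at ihh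
        rcases abs_le.mp key2 with ⟨k1, k2⟩
        rcases abs_le.mp ihh with ⟨i1, i2⟩
        rw [abs_le]; constructor <;> linarith

end Aux

section Aux2

variable {E : Type*} [NormedAddCommGroup E] [NormedSpace ℝ E]
variable {α C₀ : ℝ} {u : E → ℝ}

set_option maxHeartbeats 1000000 in
private lemma main_aux {C₁ C₄ s : ℝ} (hα0 : 0 < α) (hα1 : α < 1) (hC₀ : 0 < C₀)
    (hs : s = (2:ℝ)^(α-1)) (hs1 : s < 1) (hC₁0 : 0 ≤ C₁) (hC₄32 : 32 ≤ C₄)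
    (hC₄s : s * C₄ + 4 * C₁ + 1/2 ≤ C₄)
    (hL4 : ∀ x ∈ closedBall (0:E) 1, |u x| ≤ 4*C₀)
    (hrad : ∀ x : E, ‖x‖ ≤ 1 → ∀ a b : ℝ, 0 ≤ a → a ≤ b → b ≤ 1 →
      |u (a • x) - u (b • x)| ≤ C₁ * C₀ * (b-a)^α)
    (hD : ∀ x h : E, x ∈ ball (0:E) 1 → x + h ∈ closedBall (0:E) 1 →
      x - h ∈ closedBall (0:E) 1 → |u (x+h) + u (x-h) - 2*u x| ≤ C₀ * ‖h‖ ^ α) :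
    ∀ (k : ℕ) (x y : E), ‖x‖ ≤ 1 → ‖y‖ ≤ 1 →
      |u x - u y| ≤ (1/2)^k * (8*C₀) + C₄ * C₀ * ‖x - y‖ ^ α := by
  have hs0 : 0 < s := hs ▸ Real.rpow_pos_of_pos (by norm_num) _
  have h2s : (2:ℝ)^α = 2 * s := by
    rw [hs]
    have h := Real.rpow_add (by norm_num : (0:ℝ) < 2) 1 (α-1)
    rw [Real.rpow_one] at h
    rw [show (1:ℝ) + (α-1) = α by ring] at h
    exact h
  intro k
  induction k with
  | zero =>
    intro x y hx hy
    have h1 := hL4 x (mem_closedBall_zero_iff.mpr hx)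
    have h2 := hL4 y (mem_closedBall_zero_iff.mpr hy)
    have h3 : 0 ≤ C₄ * C₀ * ‖x - y‖ ^ α :=
      mul_nonneg (mul_nonneg (by linarith) hC₀.le) (Real.rpow_nonneg (norm_nonneg _) α)
    rcases abs_le.mp h1 with ⟨p1, p2⟩
    rcases abs_le.mp h2 with ⟨q1, q2⟩
    rw [abs_le]; constructor <;> simp only [pow_zero, one_mul] <;> linarith
  | succ k ih =>
    intro x y hx hy
    set d : ℝ := ‖x - y‖ with hd
    have hd0 : 0 ≤ d := norm_nonneg _
    rcases eq_or_lt_of_le hd0 with hz | hdpos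
    · -- d = 0
      have hxy : x = y := by
        have : ‖x - y‖ = 0 := by rw [← hd]; linarith
        rwa [norm_sub_eq_zero_iff] at this
      have hz2 : |u x - u y| = 0 := by rw [hxy]; simp
      have h1 : (0:ℝ) ≤ (1/2)^(k+1) * (8*C₀) := by positivity
      have h2 : (0:ℝ) ≤ C₄ * C₀ * d ^ α :=
        mul_nonneg (mul_nonneg (by linarith) hC₀.le) (Real.rpow_nonneg hd0 α)
      rw [hz2]; linarith
    rcases le_or_gt d (1/4) with hdsmall | hdbig
    swap
    · -- d > 1/4 : use the L^∞ bound
      have h1 := hL4 x (mem_closedBall_zero_iff.mpr hx)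
      have h2 := hL4 y (mem_closedBall_zero_iff.mpr hy)
      have hd4 : (1/4 : ℝ) ≤ d ^ α := by
        rcases le_or_gt d 1 with hd1 | hd1
        · have : d ^ (1:ℝ) ≤ d ^ α := Real.rpow_le_rpow_of_exponent_ge hdpos hd1 hα1.le
          rw [Real.rpow_one] at this; linarith
        · have : (1:ℝ) ^ α ≤ d ^ α := Real.rpow_le_rpow (by norm_num) hd1.le hα0.le
          rw [Real.one_rpow] at this; linarith
      have h24 : 8 * C₀ ≤ C₄ * C₀ * d ^ α := by
        nlinarith [mul_le_mul_of_nonneg_left hd4 (mul_pos (show (0:ℝ) < C₄ by linarith) hC₀).le]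
      have hpow : (0:ℝ) ≤ (1/2)^(k+1) * (8*C₀) := by positivity
      rcases abs_le.mp h1 with ⟨p1, p2⟩
      rcases abs_le.mp h2 with ⟨q1, q2⟩
      rw [abs_le]; constructor <;> linarith
    · -- 0 < d ≤ 1/4 : shrink toward 0 and double
      obtain ⟨lam, hlam⟩ : ∃ lam : ℝ, lam = 1 - 2*d := ⟨_, rfl⟩
      have hlam2 : (1/2 : ℝ) ≤ lam := by rw [hlam]; linarith
      have hlam1 : lam < 1 := by rw [hlam]; linarith
      have hlamd : 1 - lam = 2*d := by rw [hlam]; ring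
      have hdα0 : 0 ≤ d ^ α := Real.rpow_nonneg hd0 α
      have h2d : (2*d) ^ α = 2 * s * d ^ α := by
        rw [Real.mul_rpow (by norm_num) hd0, h2s]
      -- radial estimates
      have rad1 : |u (lam • x) - u x| ≤ C₁ * C₀ * (2 * s * d ^ α) := by
        have := hrad x hx lam 1 (by linarith) hlam1.le le_rfl
        rw [one_smul, hlamd, h2d] at this
        exact this
      have rad2 : |u (lam • y) - u y| ≤ C₁ * C₀ * (2 * s * d ^ α) := by
        have := hrad y hy lam 1 (by linarith) hlam1.le le_rfl
        rw [one_smul, hlamd, h2d] at this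
        exact this
      -- second difference at center lam•y with h = lam•(y-x)
      have hm : lam • y ∈ ball (0:E) 1 := by
        rw [mem_ball_zero_iff, norm_smul, Real.norm_eq_abs, abs_of_nonneg (by linarith)]
        nlinarith
      have hyx : ‖y - x‖ = d := by rw [hd, norm_sub_rev]
      have e1 : lam • y + lam • (y - x) = (2*lam) • y - lam • x := by module
      have e2 : lam • y - lam • (y - x) = lam • x := by module
      have hcmem : (2*lam) • y - lam • x ∈ closedBall (0:E) 1 := by
        rw [mem_closedBall_zero_iff, ← e1]
        calc ‖lam • y + lam • (y - x)‖ ≤ ‖lam • y‖ + ‖lam • (y - x)‖ := norm_add_le _ _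
        _ ≤ 1 := by
            rw [norm_smul, norm_smul, Real.norm_eq_abs, abs_of_nonneg (by linarith : (0:ℝ) ≤ lam), hyx]
            nlinarith
      have hxmem : lam • x ∈ closedBall (0:E) 1 := by
        rw [mem_closedBall_zero_iff, norm_smul, Real.norm_eq_abs,
          abs_of_nonneg (by linarith : (0:ℝ) ≤ lam)]
        nlinarith
      have key := hD (lam • y) (lam • (y - x)) hm (by rw [e1]; exact hcmem) (by rw [e2]; exact hxmem)
      rw [e1, e2] at key
      have hhnorm : ‖lam • (y - x)‖ ≤ d := by
        rw [norm_smul, Real.norm_eq_abs, abs_of_nonneg (by linarith : (0:ℝ) ≤ lam), hyx]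
        nlinarith
      have key2 : |u ((2*lam) • y - lam • x) + u (lam • x) - 2 * u (lam • y)| ≤ C₀ * d ^ α :=
        key.trans (mul_le_mul_of_nonneg_left
          (Real.rpow_le_rpow (norm_nonneg _) hhnorm hα0.le) hC₀.le)
      -- induction hypothesis on the doubled pair
      have hcnorm : ‖(2*lam) • y - lam • x‖ ≤ 1 := mem_closedBall_zero_iff.mp hcmem
      have hlamxnorm : ‖lam • x‖ ≤ 1 := mem_closedBall_zero_iff.mp hxmem
      have ihh := ih ((2*lam) • y - lam • x) (lam • x) hcnorm hlamxnorm
      have e3 : (2*lam) • y - lam • x - lam • x = (2*lam) • (y - x) := by module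
      have hdist : ‖(2*lam) • y - lam • x - lam • x‖ ≤ 2*d := by
        rw [e3, norm_smul, Real.norm_eq_abs, abs_of_nonneg (by linarith : (0:ℝ) ≤ 2*lam), hyx]
        nlinarith
      have ihh2 : |u ((2*lam) • y - lam • x) - u (lam • x)| ≤
          (1/2)^k * (8*C₀) + C₄ * C₀ * (2 * s * d ^ α) := by
        refine ihh.trans ?_
        rw [← h2d]
        have : ‖(2*lam) • y - lam • x - lam • x‖ ^ α ≤ (2*d) ^ α :=
          Real.rpow_le_rpow (norm_nonneg _) hdist hα0.le
        nlinarith [mul_le_mul_of_nonneg_left this (mul_pos (show (0:ℝ) < C₄ by linarith) hC₀).le]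
      -- combine everything
      have hfinal : C₁*C₀*(2*s*d^α) + C₁*C₀*(2*s*d^α)
          + (1/2) * ((1/2)^k * (8*C₀) + C₄*C₀*(2*s*d^α)) + (1/2) * (C₀ * d^α)
          ≤ (1/2)^(k+1) * (8*C₀) + C₄ * C₀ * d^α := by
        have hkey : (s * C₄ + 4 * C₁ + 1/2) * (C₀ * d^α) ≤ C₄ * (C₀ * d^α) :=
          mul_le_mul_of_nonneg_right hC₄s (by positivity)
        have hs4 : 4 * (s * C₁) * (C₀ * d ^ α) ≤ 4 * C₁ * (C₀ * d ^ α) := by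
          have h1 : s * C₁ ≤ C₁ := by nlinarith
          nlinarith [mul_le_mul_of_nonneg_right h1 (show (0:ℝ) ≤ C₀ * d ^ α by positivity)]
        have hpow : (1/2:ℝ)^(k+1) = (1/2) * (1/2)^k := by ring
        rw [hpow]; nlinarith
      rcases abs_le.mp rad1 with ⟨r1, r2⟩
      rcases abs_le.mp rad2 with ⟨t1, t2⟩
      rcases abs_le.mp key2 with ⟨k1, k2⟩
      rcases abs_le.mp ihh2 with ⟨i1, i2⟩
      rw [abs_le]; constructor <;> linarith

end Aux2

/-- **(H6, order 0)**: if `‖u‖_{L^∞(B₁)} ≤ C₀` and the centered second differences of `u`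
satisfy `|u(x+h) + u(x-h) - 2u(x)| ≤ C₀ |h|^α` whenever `x ∈ B₁` and `x ± h ∈ B̄₁`, then
`u ∈ C^{0,α}(B̄₁)` with `‖u‖_{C^{0,α}(B̄₁)} ≤ C C₀`, where `C = C(n, α)`. -/
theorem stmt_2 (n : ℕ) (α : ℝ) (hα : α ∈ Set.Ioo (0 : ℝ) 1) :
    ∃ C : ℝ, 0 < C ∧
      ∀ (u : EuclideanSpace ℝ (Fin n) → ℝ) (C₀ : ℝ), 0 < C₀ →
        (∀ x ∈ ball (0 : EuclideanSpace ℝ (Fin n)) 1, |u x| ≤ C₀) →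
        (∀ x h : EuclideanSpace ℝ (Fin n), x ∈ ball (0 : EuclideanSpace ℝ (Fin n)) 1 →
          x + h ∈ closedBall (0 : EuclideanSpace ℝ (Fin n)) 1 →
          x - h ∈ closedBall (0 : EuclideanSpace ℝ (Fin n)) 1 →
          |u (x + h) + u (x - h) - 2 * u x| ≤ C₀ * ‖h‖ ^ α) →
        (∀ x ∈ closedBall (0 : EuclideanSpace ℝ (Fin n)) 1, |u x| ≤ C * C₀) ∧
        (∀ x ∈ closedBall (0 : EuclideanSpace ℝ (Fin n)) 1,
          ∀ y ∈ closedBall (0 : EuclideanSpace ℝ (Fin n)) 1,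
            |u x - u y| ≤ C * C₀ * dist x y ^ α) := by
  obtain ⟨hα0, hα1⟩ := hα
  obtain ⟨s, hs⟩ : ∃ s : ℝ, s = (2:ℝ)^(α-1) := ⟨_, rfl⟩
  have hs0 : 0 < s := hs ▸ Real.rpow_pos_of_pos (by norm_num) _
  have hs1 : s < 1 := hs ▸ Real.rpow_lt_one_of_one_lt_of_neg (by norm_num) (by linarith)
  have ht : 0 < 1 - s := by linarith
  obtain ⟨C₁, hC₁⟩ : ∃ C₁ : ℝ, C₁ = 24 + 1/(2*(1-s)) := ⟨_, rfl⟩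
  have hinv : 0 < 1/(2*(1-s)) := by positivity
  have hC₁24 : 24 ≤ C₁ := by rw [hC₁]; linarith
  have hC₁s : s * C₁ + 1/2 ≤ C₁ := by
    have hfe : (1-s) * (1/(2*(1-s))) = 1/2 := by field_simp
    have : (1-s) * C₁ = 24*(1-s) + 1/2 := by rw [hC₁]; rw [mul_add, hfe]; ring
    nlinarith
  obtain ⟨C₄, hC₄⟩ : ∃ C₄ : ℝ, C₄ = 32 + (4*C₁ + 1/2)/(1-s) := ⟨_, rfl⟩
  have hq : 0 < (4*C₁ + 1/2)/(1-s) := by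
    apply div_pos (by linarith) ht
  have hC₄32 : 32 ≤ C₄ := by rw [hC₄]; linarith
  have hC₄s : s * C₄ + 4 * C₁ + 1/2 ≤ C₄ := by
    have hfe : (1-s) * ((4*C₁ + 1/2)/(1-s)) = 4*C₁ + 1/2 := by field_simp
    have : (1-s) * C₄ = 32*(1-s) + (4*C₁ + 1/2) := by rw [hC₄, mul_add, hfe]; ring
    nlinarith
  refine ⟨C₄, by linarith, ?_⟩
  intro u C₀ hC₀ hL hD
  have hL4 := linfty_aux hα0 hC₀ hL hD
  have hrad : ∀ x : EuclideanSpace ℝ (Fin n), ‖x‖ ≤ 1 → ∀ a b : ℝ,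
      0 ≤ a → a ≤ b → b ≤ 1 → |u (a • x) - u (b • x)| ≤ C₁ * C₀ * (b-a)^α := by
    intro x hx a b ha hab hb
    exact limit_aux (by positivity : (0:ℝ) < 8*C₀)
      (fun k => radial_aux hα0 hα1 hC₀ hs hC₁24 hC₁s hL4 hD k x hx a b ha hab hb)
  constructor
  · intro x hx
    have h4 := hL4 x hx
    nlinarith
  · intro x hx y hy
    have hx' := mem_closedBall_zero_iff.mp hx
    have hy' := mem_closedBall_zero_iff.mp hy
    have hm := limit_aux (by positivity : (0:ℝ) < 8*C₀)
      (fun k => main_aux hα0 hα1 hC₀ hs hs1 (by linarith : (0:ℝ) ≤ C₁) hC₄32 hC₄s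
        hL4 hrad hD k x y hx' hy')
    rw [dist_eq_norm]
    exact hm
end

section
/- Fix k ∈ ℝ and γ > 0. Let S be a nonnegative, subadditive function on the class of open convex subsets of B₁ ⊆ ℝⁿ (subadditive: if A ⊆ A₁ ∪ … ∪ A_N with all sets open convex subsets of B₁, then S(A) ≤ Σⱼ S(Aⱼ)). Then there exists δ > 0, depending only on n and k, such that: if ρ^k S(B_{ρ/2}(x₀)) ≤ δ ρ^k S(B_ρ(x₀)) + γ for every ball B_ρ(x₀) ⊆ B₁, then S(B_{1/2}) ≤ Cγ, where C depends only on n and k. -/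
/-!
Cover `B_{ρ/2}(x)` by a fixed number `N` of balls `B_{ρ/8}(yᵢ)` with `B_{ρ/2}(yᵢ) ⊆ B_ρ(x)`.
Subadditivity and the hypothesis at radius `ρ/4` around each `yᵢ` bound `ρ^k S(B_{ρ/2}(x))`
by `N 4^k γ` plus `N δ 2^k` times the same quantity at half the scale. For `k < 0` the supremum
of `ρ^k S(B_{ρ/2}(x))` may be infinite, so instead of absorbing it directly one iterates: starting
from the crude bound `ρ^{-|k|} S(B₁)`, each halving of the scale halves the error term as long as
`N δ 2^k 2^{|k|} ≤ 1/2`, and at `ρ = 1` the error tends to zero.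
-/

open Metric

lemma le_of_forall_le_half_pow_mul_add {a M c : ℝ} (h : ∀ j : ℕ, a ≤ (1 / 2) ^ j * M + c) :
    a ≤ c := by
  have hlim := ((tendsto_pow_atTop_nhds_zero_of_lt_one (by norm_num)
    (by norm_num : (1 / 2 : ℝ) < 1)).mul_const M).add_const c
  rw [zero_mul, zero_add] at hlim
  exact ge_of_tendsto' hlim h

lemma exists_fin_cover_ball_zero_one {E : Type*} [NormedAddCommGroup E] [ProperSpace E] {ε : ℝ}
    (hε : 0 < ε) :
    ∃ (N : ℕ) (p : Fin N → E), 0 < N ∧ (∀ i, ‖p i‖ ≤ 1) ∧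
      ball (0 : E) 1 ⊆ ⋃ i, ball (p i) ε := by
  obtain ⟨t, hts, htf, htcov⟩ :=
    finite_cover_balls_of_compact (isCompact_closedBall (0 : E) 1) hε
  have := htf.to_subtype
  obtain ⟨N, ⟨e⟩⟩ := Finite.exists_equiv_fin t
  have hcov : ball (0 : E) 1 ⊆ ⋃ i, ball (e.symm i : E) ε := by
    intro y hy
    obtain ⟨c, hc, hyc⟩ := Set.mem_iUnion₂.1 (htcov (ball_subset_closedBall hy))
    exact Set.mem_iUnion.2 ⟨e ⟨c, hc⟩, by simpa using hyc⟩
  obtain ⟨i, -⟩ := Set.mem_iUnion.1 (hcov (mem_ball_self one_pos))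
  exact ⟨N, fun i => e.symm i, i.pos, fun i => mem_closedBall_zero_iff.1 (hts (e.symm i).2),
    hcov⟩

section Absorption

variable {E : Type*} [NormedAddCommGroup E] [NormedSpace ℝ E]

lemma ball_subset_iUnion_ball_add_smul {ι : Type*} {p : ι → E} {ε : ℝ}
    (hcov : ball (0 : E) 1 ⊆ ⋃ i, ball (p i) ε) (x : E) {r : ℝ} (hr : 0 < r) :
    ball x r ⊆ ⋃ i, ball (x + r • p i) (r * ε) := by
  intro y hy
  have hy' : r⁻¹ • (y - x) ∈ ball (0 : E) 1 := by
    rw [mem_ball_zero_iff, norm_smul, norm_inv, Real.norm_of_nonneg hr.le, inv_mul_lt_iff₀ hr,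
      mul_one]
    exact mem_ball_iff_norm.1 hy
  obtain ⟨i, hi⟩ := Set.mem_iUnion.1 (hcov hy')
  refine Set.mem_iUnion.2 ⟨i, ?_⟩
  have hdiff : y - (x + r • p i) = r • (r⁻¹ • (y - x) - p i) := by
    rw [smul_sub, smul_inv_smul₀ hr.ne']
    abel
  rw [mem_ball_iff_norm, hdiff, norm_smul, Real.norm_of_nonneg hr.le]
  exact mul_lt_mul_of_pos_left (mem_ball_iff_norm.1 hi) hr

def OpenConvexSubadditiveOn (U : Set E) (S : Set E → ℝ) : Prop :=
  ∀ (N : ℕ) (A : Set E) (F : Fin N → Set E), IsOpen A → Convex ℝ A → A ⊆ U →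
    (∀ j, IsOpen (F j) ∧ Convex ℝ (F j) ∧ F j ⊆ U) → A ⊆ ⋃ j, F j → S A ≤ ∑ j, S (F j)

lemma OpenConvexSubadditiveOn.mono {U A B : Set E} {S : Set E → ℝ}
    (hS : OpenConvexSubadditiveOn U S) (hA : IsOpen A) (hAc : Convex ℝ A) (hB : IsOpen B)
    (hBc : Convex ℝ B) (hBU : B ⊆ U) (hAB : A ⊆ B) : S A ≤ S B := by
  simpa using hS 1 A (fun _ => B) hA hAc (hAB.trans hBU) (fun _ => ⟨hB, hBc, hBU⟩)
    (hAB.trans (Set.subset_iUnion (fun _ : Fin 1 => B) 0))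

lemma OpenConvexSubadditiveOn.rpow_mul_ball_half_le_sum {U : Set E} {S : Set E → ℝ}
    {k δ γ : ℝ} {N : ℕ} {p : Fin N → E} (hS : OpenConvexSubadditiveOn U S)
    (habs : ∀ (x₀ : E) (ρ : ℝ), 0 < ρ → ball x₀ ρ ⊆ U →
      ρ ^ k * S (ball x₀ (ρ / 2)) ≤ δ * (ρ ^ k * S (ball x₀ ρ)) + γ)
    (hp : ∀ i, ‖p i‖ ≤ 1) (hcov : ball (0 : E) 1 ⊆ ⋃ i, ball (p i) (1 / 4))
    {x : E} {ρ : ℝ} (hρ : 0 < ρ) (hx : ball x ρ ⊆ U) :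
    ∃ y : Fin N → E, (∀ i, ball (y i) (ρ / 2) ⊆ ball x ρ) ∧
      ρ ^ k * S (ball x (ρ / 2)) ≤
        ∑ i, (δ * 2 ^ k * ((ρ / 2) ^ k * S (ball (y i) (ρ / 2 / 2))) + 4 ^ k * γ) := by
  set y : Fin N → E := fun i => x + (ρ / 2) • p i
  have hy : ∀ i, ball (y i) (ρ / 2) ⊆ ball x ρ := fun i => by
    refine ball_subset_ball' ?_
    have : ρ / 2 * ‖p i‖ ≤ ρ / 2 := mul_le_of_le_one_right (by positivity) (hp i)
    simpa [y, dist_eq_norm, norm_smul, abs_of_pos hρ] using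
      (by linarith : ρ / 2 + ρ / 2 * ‖p i‖ ≤ ρ)
  have hsmall : ∀ i, ball (y i) (ρ / 8) ⊆ U :=
    fun i => ((ball_subset_ball (by linarith)).trans (hy i)).trans hx
  have hcover : ball x (ρ / 2) ⊆ ⋃ i, ball (y i) (ρ / 8) := by
    have := ball_subset_iUnion_ball_add_smul hcov x (half_pos hρ)
    rwa [show ρ / 2 * (1 / 4) = ρ / 8 by ring] at this
  have hsum : S (ball x (ρ / 2)) ≤ ∑ i, S (ball (y i) (ρ / 8)) :=
    hS N _ _ isOpen_ball (convex_ball _ _) ((ball_subset_ball (by linarith)).trans hx)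
      (fun i => ⟨isOpen_ball, convex_ball _ _, hsmall i⟩) hcover
  have hscale (c : ℝ) (hc : 0 < c) : ρ ^ k = c ^ k * (ρ / c) ^ k := by
    rw [Real.div_rpow hρ.le hc.le, mul_div_cancel₀ _ (Real.rpow_pos_of_pos hc k).ne']
  have hterm (i : Fin N) : ρ ^ k * S (ball (y i) (ρ / 8)) ≤
      δ * 2 ^ k * ((ρ / 2) ^ k * S (ball (y i) (ρ / 2 / 2))) + 4 ^ k * γ := by
    have h := habs (y i) (ρ / 4) (by positivity)
      (((ball_subset_ball (by linarith)).trans (hy i)).trans hx)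
    have h42 : (4 : ℝ) ^ k * (ρ / 4) ^ k = 2 ^ k * (ρ / 2) ^ k := by
      rw [← hscale 4 (by norm_num), ← hscale 2 two_pos]
    rw [show ρ / 4 / 2 = ρ / 8 by ring] at h
    rw [show ρ / 2 / 2 = ρ / 4 by ring]
    calc ρ ^ k * S (ball (y i) (ρ / 8))
        = 4 ^ k * ((ρ / 4) ^ k * S (ball (y i) (ρ / 8))) := by rw [hscale 4 (by norm_num)]; ring
      _ ≤ 4 ^ k * (δ * ((ρ / 4) ^ k * S (ball (y i) (ρ / 4))) + γ) := by gcongr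
      _ = _ := by linear_combination (δ * S (ball (y i) (ρ / 4))) * h42
  refine ⟨y, hy, ?_⟩
  calc ρ ^ k * S (ball x (ρ / 2))
      ≤ ρ ^ k * ∑ i, S (ball (y i) (ρ / 8)) := by gcongr
    _ ≤ _ := by
      rw [Finset.mul_sum]
      exact Finset.sum_le_sum fun i _ => hterm i

lemma OpenConvexSubadditiveOn.rpow_mul_ball_half_le_geometric {U : Set E} {S : Set E → ℝ}
    {k δ γ : ℝ} {N : ℕ} {p : Fin N → E} (hU : IsOpen U) (hUc : Convex ℝ U)
    (hS0 : ∀ A : Set E, IsOpen A → Convex ℝ A → A ⊆ U → 0 ≤ S A)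
    (hS : OpenConvexSubadditiveOn U S)
    (habs : ∀ (x₀ : E) (ρ : ℝ), 0 < ρ → ball x₀ ρ ⊆ U →
      ρ ^ k * S (ball x₀ (ρ / 2)) ≤ δ * (ρ ^ k * S (ball x₀ ρ)) + γ)
    (hp : ∀ i, ‖p i‖ ≤ 1) (hcov : ball (0 : E) 1 ⊆ ⋃ i, ball (p i) (1 / 4))
    (hδ0 : 0 ≤ δ) (hδ : N * 2 ^ k * 2 ^ |k| * δ ≤ 1 / 2) (hγ : 0 ≤ γ) (j : ℕ)
    {x : E} {ρ : ℝ} (hρ : 0 < ρ) (hρ1 : ρ ≤ 1) (hx : ball x ρ ⊆ U) :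
    ρ ^ k * S (ball x (ρ / 2)) ≤ (1 / 2) ^ j * ρ ^ (-|k|) * S U + 2 * (N * 4 ^ k * γ) := by
  have hSU : 0 ≤ S U := hS0 U hU hUc subset_rfl
  have hQ : 0 ≤ N * 4 ^ k * γ := by positivity
  induction j generalizing x ρ with
  | zero =>
    have hhalf : ball x (ρ / 2) ⊆ U := (ball_subset_ball (by linarith)).trans hx
    calc ρ ^ k * S (ball x (ρ / 2)) ≤ ρ ^ (-|k|) * S U :=
          mul_le_mul (Real.rpow_le_rpow_of_exponent_ge hρ hρ1 (neg_abs_le k))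
            (hS.mono isOpen_ball (convex_ball _ _) hU hUc subset_rfl hhalf)
            (hS0 _ isOpen_ball (convex_ball _ _) hhalf) (Real.rpow_nonneg hρ.le _)
      _ ≤ _ := by simp only [pow_zero, one_mul]; linarith
  | succ j ih =>
    obtain ⟨y, hy, hsum⟩ := hS.rpow_mul_ball_half_le_sum habs hp hcov hρ hx
    set P := (1 / 2 : ℝ) ^ j * ρ ^ (-|k|) * S U
    have hP : 0 ≤ P := by positivity
    have hchild (i : Fin N) : (ρ / 2) ^ k * S (ball (y i) (ρ / 2 / 2)) ≤
        2 ^ |k| * P + 2 * (N * 4 ^ k * γ) := by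
      have hw : (ρ / 2) ^ (-|k|) = 2 ^ |k| * ρ ^ (-|k|) := by
        rw [Real.div_rpow hρ.le zero_le_two, Real.rpow_neg zero_le_two, div_inv_eq_mul, mul_comm]
      have := ih (half_pos hρ) (by linarith) ((hy i).trans hx)
      rw [hw] at this
      linarith
    set θ : ℝ := N * 2 ^ k * δ
    have hθ0 : 0 ≤ θ := by positivity
    have hθ : θ * 2 ^ |k| ≤ 1 / 2 := by linarith
    have hθ' : θ ≤ 1 / 2 :=
      (le_mul_of_one_le_right hθ0 (Real.one_le_rpow one_le_two (abs_nonneg k))).trans hθ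
    calc ρ ^ k * S (ball x (ρ / 2))
        ≤ ∑ _i : Fin N, (δ * 2 ^ k * (2 ^ |k| * P + 2 * (N * 4 ^ k * γ)) + 4 ^ k * γ) :=
          hsum.trans (Finset.sum_le_sum fun i _ => by
            gcongr
            exact hchild i)
      _ = θ * 2 ^ |k| * P + θ * (2 * (N * 4 ^ k * γ)) + N * 4 ^ k * γ := by
          simp only [Finset.sum_const, Finset.card_univ, Fintype.card_fin, nsmul_eq_mul, θ]
          ring
      _ ≤ 1 / 2 * P + 1 / 2 * (2 * (N * 4 ^ k * γ)) + N * 4 ^ k * γ := by gcongr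
      _ = (1 / 2) ^ (j + 1) * ρ ^ (-|k|) * S U + 2 * (N * 4 ^ k * γ) := by
          simp only [P, pow_succ]
          ring

end Absorption

/-- **Abstract absorption lemma (Lemma 2.27)**: for `k ∈ ℝ` there exist `δ > 0` and
`C > 0`, depending only on `n` and `k`, such that for any `γ > 0` and any nonnegative,
subadditive function `S` on open convex subsets of `B₁ ⊆ ℝⁿ`, if
`ρ^k S(B_{ρ/2}(x₀)) ≤ δ ρ^k S(B_ρ(x₀)) + γ` for every ball `B_ρ(x₀) ⊆ B₁`,
then `S(B_{1/2}) ≤ C γ`. -/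
theorem stmt_12 (n : ℕ) (k : ℝ) :
    ∃ δ : ℝ, 0 < δ ∧ ∃ C : ℝ, 0 < C ∧
      ∀ γ : ℝ, 0 < γ →
        ∀ S : Set (EuclideanSpace ℝ (Fin n)) → ℝ,
          (∀ A : Set (EuclideanSpace ℝ (Fin n)),
            IsOpen A → Convex ℝ A → A ⊆ ball (0 : EuclideanSpace ℝ (Fin n)) 1 →
            0 ≤ S A) →
          (∀ (N : ℕ) (A : Set (EuclideanSpace ℝ (Fin n)))
              (F : Fin N → Set (EuclideanSpace ℝ (Fin n))),
            IsOpen A → Convex ℝ A → A ⊆ ball (0 : EuclideanSpace ℝ (Fin n)) 1 →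
            (∀ j, IsOpen (F j) ∧ Convex ℝ (F j) ∧
              F j ⊆ ball (0 : EuclideanSpace ℝ (Fin n)) 1) →
            A ⊆ ⋃ j, F j → S A ≤ ∑ j, S (F j)) →
          (∀ (x₀ : EuclideanSpace ℝ (Fin n)) (ρ : ℝ), 0 < ρ →
            ball x₀ ρ ⊆ ball (0 : EuclideanSpace ℝ (Fin n)) 1 →
            ρ ^ k * S (ball x₀ (ρ / 2)) ≤ δ * (ρ ^ k * S (ball x₀ ρ)) + γ) →
          S (ball (0 : EuclideanSpace ℝ (Fin n)) (1 / 2)) ≤ C * γ := by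
  obtain ⟨N, p, hN, hp, hcov⟩ :=
    exists_fin_cover_ball_zero_one (E := EuclideanSpace ℝ (Fin n)) (by norm_num : (0 : ℝ) < 1 / 4)
  have hN' : (0 : ℝ) < N := Nat.cast_pos.2 hN
  refine ⟨(2 * (N : ℝ) * 2 ^ k * 2 ^ |k|)⁻¹, by positivity, 2 * ((N : ℝ) * 4 ^ k), by positivity,
    fun γ hγ S hS0 hS habs => ?_⟩
  have hδ : (N : ℝ) * 2 ^ k * 2 ^ |k| * (2 * (N : ℝ) * 2 ^ k * 2 ^ |k|)⁻¹ ≤ 1 / 2 :=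
    le_of_eq (by field_simp)
  have hgeom (j : ℕ) := OpenConvexSubadditiveOn.rpow_mul_ball_half_le_geometric isOpen_ball
    (convex_ball _ _) hS0 hS habs hp hcov (by positivity) hδ hγ.le j one_pos le_rfl subset_rfl
  simp only [Real.one_rpow, one_mul, mul_one] at hgeom
  rw [mul_assoc]
  exact le_of_forall_le_half_pow_mul_add hgeom
end

section
/- Let u : ℝⁿ → ℝ be a convex function such that the set {u = 0} contains the line {t e' : t ∈ ℝ} for some unit vector e'. Then u is invariant under translations along e': u(x + t e') = u(x) for all x ∈ ℝⁿ and all t ∈ ℝ. -/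
/-! Along the parallel line `x + ℝ v`, midpoint convexity bounds `u` above by
`(u (2x) + sup_{ℝ v} u) / 2`. A convex function bounded above by `M` along a ray cannot increase
in the ray's direction: `x + v` is the convex combination of `x` and `x + k v` with weight `1/k`,
so `k (u (x + v) - u x) ≤ M - u x` for every `k ≥ 1`. Applied in both directions, this gives
`u (x + t v) = u x`. -/

open Set

section

variable {E : Type*} [AddCommGroup E] [Module ℝ E] {f : E → ℝ}

theorem ConvexOn.apply_add_le_of_forall_apply_add_smul_le (hf : ConvexOn ℝ univ f) {x v : E}
    {M : ℝ} (hM : ∀ k : ℝ, 1 ≤ k → f (x + k • v) ≤ M) : f (x + v) ≤ f x := by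
  have secant : ∀ k : ℝ, 1 ≤ k → k * (f (x + v) - f x) ≤ M - f x := by
    intro k hk
    have hk0 : 0 < k := by linarith
    have hconv := hf.2 (mem_univ x) (mem_univ (x + k • v))
      (sub_nonneg.2 (inv_le_one_of_one_le₀ hk)) (inv_nonneg.2 hk0.le) (by ring)
    have hpoint : (1 - k⁻¹) • x + k⁻¹ • (x + k • v) = x + v := by
      rw [smul_add, smul_smul, inv_mul_cancel₀ hk0.ne', one_smul]; module
    rw [hpoint, smul_eq_mul, smul_eq_mul] at hconv
    have hbound := mul_le_mul_of_nonneg_left (hM k hk) (inv_nonneg.2 hk0.le)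
    calc k * (f (x + v) - f x) ≤ k * (k⁻¹ * (M - f x)) := by gcongr; linarith
      _ = M - f x := by field_simp
  by_contra! hlt
  set d := f (x + v) - f x
  have hd : 0 < d := sub_pos.2 hlt
  have hsecant := secant _ (le_max_left 1 ((M - f x) / d + 1))
  have hk := mul_le_mul_of_nonneg_right (le_max_right 1 ((M - f x) / d + 1)) hd.le
  rw [add_mul, div_mul_cancel₀ _ hd.ne'] at hk
  linarith

theorem ConvexOn.apply_add_smul_eq_of_forall_apply_smul_le (hf : ConvexOn ℝ univ f) {v : E}
    {C : ℝ} (hC : ∀ t : ℝ, f (t • v) ≤ C) (x : E) (t : ℝ) : f (x + t • v) = f x := by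
  have along_line_le : ∀ (y : E) (s : ℝ), f (y + s • v) ≤ (f ((2 : ℝ) • y) + C) / 2 := by
    intro y s
    have hmid := hf.2 (mem_univ ((2 : ℝ) • y)) (mem_univ ((2 * s) • v))
      (by norm_num : (0 : ℝ) ≤ 1 / 2) (by norm_num : (0 : ℝ) ≤ 1 / 2) (by norm_num)
    have hpoint : (1 / 2 : ℝ) • (2 : ℝ) • y + (1 / 2 : ℝ) • (2 * s) • v = y + s • v := by module
    rw [hpoint, smul_eq_mul, smul_eq_mul] at hmid
    linarith [hC (2 * s)]
  have translate_le : ∀ (y : E) (s : ℝ), f (y + s • v) ≤ f y := fun y s =>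
    hf.apply_add_le_of_forall_apply_add_smul_le (M := (f ((2 : ℝ) • y) + C) / 2)
      fun k _ => by simpa only [smul_smul] using along_line_le y (k * s)
  refine le_antisymm (translate_le x t) ?_
  simpa only [add_neg_cancel_right, neg_smul, smul_neg] using translate_le (x + t • v) (-t)

end

theorem stmt_19_general (n : ℕ) (u : EuclideanSpace ℝ (Fin n) → ℝ)
    (hconv : ConvexOn ℝ Set.univ u)
    (e' : EuclideanSpace ℝ (Fin n))
    (hline : ∀ t : ℝ, u (t • e') = 0) :
    ∀ (x : EuclideanSpace ℝ (Fin n)) (t : ℝ), u (x + t • e') = u x :=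
  hconv.apply_add_smul_eq_of_forall_apply_smul_le fun t => (hline t).le

/-- **Lemma 5.24**: if `u : ℝⁿ → ℝ` is convex and its zero set contains the whole line
`{t e' : t ∈ ℝ}` for a unit vector `e'`, then `u` is invariant under translations
along `e'`: `u(x + t e') = u(x)` for all `x ∈ ℝⁿ` and `t ∈ ℝ`. -/
theorem stmt_19 (n : ℕ) (u : EuclideanSpace ℝ (Fin n) → ℝ)
    (hconv : ConvexOn ℝ Set.univ u)
    (e' : EuclideanSpace ℝ (Fin n)) (he' : ‖e'‖ = 1)
    (hline : ∀ t : ℝ, u (t • e') = 0) :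
    ∀ (x : EuclideanSpace ℝ (Fin n)) (t : ℝ), u (x + t • e') = u x :=
  stmt_19_general n u hconv e' hline
end
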